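/- Let t be a binary tree. Then the map τ ↦ W(t,τ), from states of t to tuples of words of M indexed by the leaves of t, is injective. -/

import Mathlib

/-- Finite ordered rooted binary trees. -/
inductive BTree where
  | leaf : BTree
  | node : BTree → BTree → BTree
deriving DecidableEq

/-- Positions (vertices) in a binary tree: `false` = go to the left child,
`true` = go to the right child. -/
abbrev Pos := List Bool

/-- The subtree of `t` at position `p`, if `p` stays inside `t`. -/
def BTree.subtreeAt : BTree → Pos → Option BTree
  | t, [] => some t
  | .leaf, _ :: _ => none
  | .node l r, b :: p => (if b then r else l).subtreeAt p

/-- `p` is an internal (trivalent) vertex of `t`. -/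
def IsInternal (t : BTree) (p : Pos) : Prop :=
  ∃ l r, t.subtreeAt p = some (BTree.node l r)

/-- `p` is a leaf of `t`. -/
def IsLeafPos (t : BTree) (p : Pos) : Prop :=
  t.subtreeAt p = some BTree.leaf

/-- The word `W(t,τ)_ℓ` in the free monoid `M` on the letters `a_j = (j, false)`,
`b_j = (j, true)` (`j ∈ ℕ`), read along the root-to-`ℓ` path `p`: the `i`-th edge
contributes the letter `a_{g} `resp. `b_g` (according to whether it is a left or a right
edge) where `g = (∑_{r ≤ i} τ(p.take r)) − 1`, with the convention that index `−1`
(i.e. when the sum vanishes) gives the empty word.  The state `τ` is given as a total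
function on positions; only its values at the internal vertices of the tree on the path
to `ℓ` are used. -/
def Wword (τ : Pos → Fin 2) (p : Pos) : List (ℕ × Bool) :=
  (List.range p.length).filterMap fun i =>
    let s : ℕ := ((List.range (i + 1)).map fun r => ((τ (p.take r) : ℕ))).sum
    if s = 0 then none else some (s - 1, p.getD i false)


/-!
Along a path `q`, write `potential τ q` for the sum of `τ` over the proper prefixes of `q`.
Extending `q` by one edge appends to `Wword τ q` the letter indexed by `potential − 1`, or
nothing when the potential is still `0`; since potentials only grow along a path, the last
letter of a word records the potential at its endpoint. Hence equal words at a leaf force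
equal words, and so equal potentials, at every prefix of the path to it, and `τ p` is the
difference of the potentials at `p ++ [false]` and at `p`.
-/

def potential (τ : Pos → Fin 2) (q : Pos) : ℕ :=
  ((List.range q.length).map fun r => (τ (q.take r) : ℕ)).sum

lemma potential_append_singleton (τ : Pos → Fin 2) (q : Pos) (b : Bool) :
    potential τ (q ++ [b]) = potential τ q + τ q := by
  simp only [potential, List.length_append, List.length_singleton, List.range_succ,
    List.map_append, List.sum_append, List.map_cons, List.map_nil, List.sum_cons,
    List.sum_nil, List.take_left, add_zero]
  congr 2
  refine List.map_congr_left fun r hr => ?_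
  rw [List.take_append_of_le_length (List.mem_range.1 hr).le]

lemma Wword_append_singleton (τ : Pos → Fin 2) (q : Pos) (b : Bool) :
    Wword τ (q ++ [b]) = Wword τ q ++
      if potential τ (q ++ [b]) = 0 then [] else [(potential τ (q ++ [b]) - 1, b)] := by
  rw [Wword, Wword, List.length_append, List.length_singleton, List.range_succ,
    List.filterMap_append]
  congr 1
  · refine List.filterMap_congr fun i hi => ?_
    have hi : i < q.length := List.mem_range.1 hi
    have hsum : ((List.range (i + 1)).map fun r => (τ ((q ++ [b]).take r) : ℕ)) =
        (List.range (i + 1)).map fun r => (τ (q.take r) : ℕ) :=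
      List.map_congr_left fun r hr => by
        rw [List.take_append_of_le_length (by have := List.mem_range.1 hr; omega)]
    simp only [hsum, List.getD_append _ _ _ _ hi]
  · have hlast : (q ++ [b]).getD q.length false = b := by
      simp [List.getD_eq_getElem?_getD]
    simp only [List.filterMap_cons, List.filterMap_nil, hlast]
    split_ifs <;> simp_all [potential]

lemma potential_eq_getLast?_Wword (τ : Pos → Fin 2) (q : Pos) :
    potential τ q = ((Wword τ q).getLast?.map fun x => x.1 + 1).getD 0 := by
  induction q using List.reverseRecOn with
  | nil => rfl
  | append_singleton q b ih =>
    rw [Wword_append_singleton]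
    split_ifs with h
    · have : potential τ q = 0 := by rw [potential_append_singleton] at h; omega
      rw [List.append_nil, ← ih, h, this]
    · simp only [List.getLast?_append, List.getLast?_singleton, Option.some_or,
        Option.map_some, Option.getD_some]
      omega

lemma potential_eq_of_Wword_eq {τ₁ τ₂ : Pos → Fin 2} {q : Pos}
    (h : Wword τ₁ q = Wword τ₂ q) : potential τ₁ q = potential τ₂ q := by
  rw [potential_eq_getLast?_Wword, potential_eq_getLast?_Wword, h]

lemma Wword_eq_of_append_singleton_eq {τ₁ τ₂ : Pos → Fin 2} {q : Pos} {b : Bool}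
    (h : Wword τ₁ (q ++ [b]) = Wword τ₂ (q ++ [b])) : Wword τ₁ q = Wword τ₂ q := by
  have hpot := potential_eq_of_Wword_eq h
  rw [Wword_append_singleton, Wword_append_singleton, hpot] at h
  exact List.append_cancel_right h

lemma Wword_eq_of_append_eq {τ₁ τ₂ : Pos → Fin 2} {q : Pos} (e : Pos)
    (h : Wword τ₁ (q ++ e) = Wword τ₂ (q ++ e)) : Wword τ₁ q = Wword τ₂ q := by
  induction e using List.reverseRecOn with
  | nil => simpa using h
  | append_singleton e b ih =>
    rw [← List.append_assoc] at h
    exact ih (Wword_eq_of_append_singleton_eq h)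

lemma BTree.exists_subtreeAt_eq_leaf (s : BTree) : ∃ e : Pos, s.subtreeAt e = some .leaf := by
  induction s with
  | leaf => exact ⟨[], rfl⟩
  | node l r ihl ihr =>
    obtain ⟨e, he⟩ := ihl
    exact ⟨false :: e, he⟩

lemma BTree.subtreeAt_append (t : BTree) (p e : Pos) :
    t.subtreeAt (p ++ e) = (t.subtreeAt p).bind fun s => s.subtreeAt e := by
  induction p generalizing t with
  | nil => rfl
  | cons b p ih =>
    cases t with
    | leaf => rfl
    | node l r => exact ih _

lemma IsInternal.exists_isLeafPos_append {t : BTree} {p : Pos} (hp : IsInternal t p) :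
    ∃ e : Pos, IsLeafPos t (p ++ false :: e) := by
  obtain ⟨l, r, hsub⟩ := hp
  obtain ⟨e, he⟩ := l.exists_subtreeAt_eq_leaf
  exact ⟨e, by rw [IsLeafPos, BTree.subtreeAt_append, hsub]; exact he⟩

/-- For every binary tree `t`, the map `τ ↦ W(t,τ)` from states of `t`
(functions from the internal vertices of `t` to `{0,1}`) to tuples of words of `M`
indexed by the leaves of `t` is injective: if two states yield the same word at every
leaf, then they agree at every internal vertex. -/
theorem stmt10 (t : BTree) (τ₁ τ₂ : Pos → Fin 2)
    (h : ∀ p : Pos, IsLeafPos t p → Wword τ₁ p = Wword τ₂ p) :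
    ∀ p : Pos, IsInternal t p → τ₁ p = τ₂ p := by
  intro p hp
  obtain ⟨e, he⟩ := hp.exists_isLeafPos_append
  have hw := h _ he
  have hpot : potential τ₁ p = potential τ₂ p :=
    potential_eq_of_Wword_eq (Wword_eq_of_append_eq _ hw)
  have hpot' : potential τ₁ (p ++ [false]) = potential τ₂ (p ++ [false]) := by
    rw [← List.singleton_append, ← List.append_assoc] at hw
    exact potential_eq_of_Wword_eq (Wword_eq_of_append_eq _ hw)
  rw [potential_append_singleton, potential_append_singleton] at hpot'
  exact Fin.ext (by omega)
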